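/- arXiv:0806.4857 — 3 statements merged into one kernel-verified Lean document; each statement's English description precedes it below -/
import Mathlib

section
/- Let B ⊂ ℝⁿ be a measurable set with |B| ≤ 1 and let b : B → ℝ be measurable with ∫_B exp(|b(x)|) dx ≤ 2. Then there exists a constant C (independent of B, b, ψ) such that for every integrable function ψ on B, ‖bψ‖_{L^Φ(B)} ≤ C ∫_B |ψ| dx, where Φ(t) = t/log(e+t) and ‖·‖_{L^Φ(B)} is the Luxemburg functional inf{k>0 : ∫_B Φ(|bψ|/k) dx ≤ 1}. -/
open Real MeasureTheory
open scoped ENNReal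

/-- The Orlicz function Φ(t) = t / log(e + t). -/
noncomputable def Phi (t : ℝ) : ℝ := t / Real.log (Real.exp 1 + t)

/-- The Luxemburg functional for real-valued functions. -/
noncomputable def luxNorm {n : ℕ} (μ : Measure (EuclideanSpace ℝ (Fin n)))
    (f : EuclideanSpace ℝ (Fin n) → ℝ) : ℝ≥0∞ :=
  sInf (ENNReal.ofReal ''
    {k : ℝ | 0 < k ∧ ∫⁻ x, ENNReal.ofReal (Phi (|f x| / k)) ∂μ ≤ 1})

/-!
Young-type inequality for `Φ(t) = t / log (e + t)`: `Φ(a v) ≤ eᵃ / 4 + 3 v` for `a, v ≥ 0`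
(if `a v` is large compared to `eᵃ`, then `log (e + a v) ≳ a`, which absorbs the factor `a`).
Applied with `a = |b|`, `v = |ψ| / k` and integrated over `B`, it bounds the Luxemburg modular
by `2 / 4 + 3 ‖ψ‖₁ / k`, which is at most `1` as soon as `k ≥ 6 ‖ψ‖₁`.
-/

lemma one_le_log_exp_one_add {t : ℝ} (ht : 0 ≤ t) : 1 ≤ log (exp 1 + t) :=
  (le_log_iff_exp_le (by positivity)).2 (by linarith)

lemma Phi_le_self {t : ℝ} (ht : 0 ≤ t) : Phi t ≤ t :=
  div_le_self ht (one_le_log_exp_one_add ht)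

lemma Phi_mul_le_exp_div_four_add {a v : ℝ} (ha : 0 ≤ a) (hv : 0 ≤ v) :
    Phi (a * v) ≤ exp a / 4 + 3 * v := by
  have hav : 0 ≤ a * v := mul_nonneg ha hv
  rcases le_or_gt (a * v) (exp a / 4) with hsmall | hlarge
  · linarith [Phi_le_self hav]
  rcases le_or_gt a 3 with ha3 | ha3
  · linarith [Phi_le_self hav, mul_le_mul_of_nonneg_right ha3 hv, exp_pos a]
  have hlog4 : log 4 < 2 := by
    rw [show (4 : ℝ) = 2 * 2 by norm_num, log_mul two_ne_zero two_ne_zero]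
    linarith [log_two_lt_d9]
  have hlog : a - log 4 ≤ log (exp 1 + a * v) := by
    have h : log (exp a / 4) = a - log 4 := by rw [log_div (exp_pos a).ne' four_ne_zero, log_exp]
    rw [← h]
    exact log_le_log (by positivity) (by linarith [exp_pos 1])
  calc Phi (a * v) ≤ a * v / (a - log 4) := div_le_div_of_nonneg_left hav (by linarith) hlog
    _ ≤ 3 * v := by
      rw [div_le_iff₀ (by linarith)]
      nlinarith
    _ ≤ exp a / 4 + 3 * v := by linarith [exp_pos a]

lemma lintegral_ofReal_Phi_mul_div_le {α : Type*} [MeasurableSpace α] {μ : Measure α}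
    (b : α → ℝ) {ψ : α → ℝ} (hψ : Integrable ψ μ) {k : ℝ} (hk : 0 < k) :
    ∫⁻ x, ENNReal.ofReal (Phi (|b x * ψ x| / k)) ∂μ ≤
      (∫⁻ x, ENNReal.ofReal (exp |b x|) ∂μ) / 4 +
        ENNReal.ofReal (3 * (∫ x, |ψ x| ∂μ) / k) := by
  have hpointwise : ∀ x, ENNReal.ofReal (Phi (|b x * ψ x| / k)) ≤
      ENNReal.ofReal (exp |b x|) / 4 + ENNReal.ofReal (3 * |ψ x| / k) := fun x => by
    have h := Phi_mul_le_exp_div_four_add (abs_nonneg (b x)) (div_nonneg (abs_nonneg (ψ x)) hk.le)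
    rw [← mul_div_assoc 3] at h
    rw [abs_mul, mul_div_assoc]
    calc _ ≤ ENNReal.ofReal (exp |b x| / 4 + 3 * |ψ x| / k) := ENNReal.ofReal_le_ofReal h
      _ ≤ _ := by
        rw [ENNReal.ofReal_add (by positivity) (by positivity),
          ENNReal.ofReal_div_of_pos four_pos, ENNReal.ofReal_ofNat]
  have hψ' : Integrable (fun x => 3 * |ψ x| / k) μ := (hψ.abs.const_mul 3).div_const k
  calc _ ≤ ∫⁻ x, ENNReal.ofReal (exp |b x|) / 4 + ENNReal.ofReal (3 * |ψ x| / k) ∂μ :=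
        lintegral_mono hpointwise
    _ = (∫⁻ x, ENNReal.ofReal (exp |b x|) ∂μ) / 4 +
          ENNReal.ofReal (∫ x, 3 * |ψ x| / k ∂μ) := by
      simp only [div_eq_mul_inv (b := (4 : ℝ≥0∞))]
      rw [lintegral_add_right' _ hψ'.aemeasurable.ennreal_ofReal,
        lintegral_mul_const' _ _ (by simp),
        ofReal_integral_eq_lintegral_ofReal hψ' (.of_forall fun x => by positivity)]
    _ = _ := by rw [integral_div, integral_const_mul]

lemma luxNorm_le_ofReal_of_forall_lt {n : ℕ} {μ : Measure (EuclideanSpace ℝ (Fin n))}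
    {f : EuclideanSpace ℝ (Fin n) → ℝ} {c : ℝ} (hc : 0 ≤ c)
    (h : ∀ k, c < k → ∫⁻ x, ENNReal.ofReal (Phi (|f x| / k)) ∂μ ≤ 1) :
    luxNorm μ f ≤ ENNReal.ofReal c := by
  refine ENNReal.le_of_forall_pos_le_add fun ε hε _ => ?_
  have hk : c < c + ε := by simpa using hε
  calc luxNorm μ f ≤ ENNReal.ofReal (c + ε) :=
        sInf_le ⟨c + ε, ⟨by positivity, h _ hk⟩, rfl⟩
    _ = ENNReal.ofReal c + ε := by
      rw [ENNReal.ofReal_add hc ε.coe_nonneg, ENNReal.ofReal_coe_nnreal]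

theorem luxNorm_mul_le_of_exp_integrable_general (n : ℕ) :
    ∃ C > (0 : ℝ), ∀ (B : Set (EuclideanSpace ℝ (Fin n)))
      (b ψ : EuclideanSpace ℝ (Fin n) → ℝ),
      MeasurableSet B → volume B ≤ 1 → Measurable b → Measurable ψ →
      (∫⁻ x in B, ENNReal.ofReal (Real.exp |b x|)) ≤ 2 →
      IntegrableOn ψ B volume →
      luxNorm (volume.restrict B) (fun x => b x * ψ x) ≤
        ENNReal.ofReal (C * ∫ x in B, |ψ x|) := by
  refine ⟨6, by norm_num, fun B b ψ _ _ _ _ hexp hψ => ?_⟩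
  have hM : 0 ≤ ∫ x in B, |ψ x| := integral_nonneg fun x => abs_nonneg _
  refine luxNorm_le_ofReal_of_forall_lt (by positivity) fun k hk => ?_
  have hk0 : 0 < k := lt_of_le_of_lt (by positivity) hk
  calc _ ≤ _ := lintegral_ofReal_Phi_mul_div_le b hψ hk0
    _ ≤ 2 / 4 + ENNReal.ofReal (2 / 4) := by
      gcongr ?_ / 4 + ENNReal.ofReal ?_
      rw [div_le_div_iff₀ hk0 four_pos]
      linarith
    _ = 1 := by
      rw [ENNReal.ofReal_div_of_pos four_pos, ENNReal.ofReal_ofNat, ENNReal.ofReal_ofNat,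
        ENNReal.div_add_div_same, two_add_two_eq_four]
      exact ENNReal.div_self four_ne_zero ENNReal.ofNat_ne_top

theorem luxNorm_mul_le_of_exp_integrable (n : ℕ) (hn : 1 ≤ n) :
    ∃ C > (0 : ℝ), ∀ (B : Set (EuclideanSpace ℝ (Fin n)))
      (b ψ : EuclideanSpace ℝ (Fin n) → ℝ),
      MeasurableSet B → volume B ≤ 1 → Measurable b → Measurable ψ →
      (∫⁻ x in B, ENNReal.ofReal (Real.exp |b x|)) ≤ 2 →
      IntegrableOn ψ B volume →
      luxNorm (volume.restrict B) (fun x => b x * ψ x) ≤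
        ENNReal.ofReal (C * ∫ x in B, |ψ x|) :=
  luxNorm_mul_le_of_exp_integrable_general n
end

section
/- Let 0 < γ and k ≥ γ an integer. There exists a constant C such that for every f in the inhomogeneous Lipschitz space Λ_γ(ℝⁿ) (with 0 < γ < 1, so Λ_γ consists of bounded functions with |f(x)−f(y)| ≤ ‖f‖·|x−y|^γ) and every ball B ⊂ ℝⁿ, (1/|B|) ∫_B |f(x) − P_B^k f(x)| dx ≤ C ‖f‖_{Λ_γ} |B|^{γ/n}, where P_B^k f is the L²(B)-orthogonal projection of f onto polynomials of degree ≤ k. -/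
open Real MeasureTheory Metric

/-! Write `g = f - P` on the ball `B = ball c r`. Testing the orthogonality relations against the
polynomial `f c - P` gives `∫_B g² = ∫_B g (f - f c) ≤ L r^γ ∫_B |g|`, while Jensen's inequality
gives `(⨍_B |g|)² ≤ ⨍_B g²`; together, `⨍_B |g| ≤ L r^γ`. Finally `r^γ` is a dimensional constant
times `|B|^(γ/n)`. -/

theorem average_abs_le_of_integral_sq_eq {α : Type*} [MeasurableSpace α] {μ : Measure α}
    [IsFiniteMeasure μ] [NeZero μ] {g h : α → ℝ} {ε : ℝ}
    (hg : Integrable g μ) (hg2 : Integrable (fun x => g x ^ 2) μ)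
    (hgh : ∫ x, g x ^ 2 ∂μ = ∫ x, g x * h x ∂μ) (hh : ∀ᵐ x ∂μ, |h x| ≤ ε) :
    ⨍ x, |g x| ∂μ ≤ ε := by
  have hsq : ∫ x, g x ^ 2 ∂μ ≤ ε * ∫ x, |g x| ∂μ := by
    rw [hgh, ← integral_const_mul]
    refine (le_abs_self _).trans ((abs_integral_le_integral_abs).trans ?_)
    refine integral_mono_of_nonneg (ae_of_all _ fun _ => abs_nonneg _)
      (hg.abs.const_mul ε) ?_
    filter_upwards [hh] with x hx
    rw [abs_mul, mul_comm ε]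
    exact mul_le_mul_of_nonneg_left hx (abs_nonneg _)
  have hjensen : (⨍ x, |g x| ∂μ) ^ 2 ≤ ⨍ x, g x ^ 2 ∂μ := by
    simpa only [sq_abs] using (even_two.convexOn_pow (𝕜 := ℝ)).map_average_le
      (continuous_pow 2).continuousOn isClosed_univ (ae_of_all _ fun _ => Set.mem_univ _)
      hg.abs (by simpa only [Function.comp_def, sq_abs] using hg2)
  have havg : ⨍ x, g x ^ 2 ∂μ ≤ ε * ⨍ x, |g x| ∂μ := by
    simp only [average_eq, smul_eq_mul]
    nlinarith [inv_nonneg.2 (measureReal_nonneg (μ := μ) (s := Set.univ))]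
  have hnonneg : 0 ≤ ⨍ x, |g x| ∂μ := by
    rw [average_eq, smul_eq_mul]
    exact mul_nonneg (inv_nonneg.2 measureReal_nonneg) (integral_nonneg fun _ => abs_nonneg _)
  have hε : 0 ≤ ε := let ⟨_, hx⟩ := hh.exists; (abs_nonneg _).trans hx
  nlinarith

theorem setIntegral_sq_sub_eval_eq {ι : Type*} [Fintype ι] {μ : Measure (EuclideanSpace ℝ ι)}
    {s : Set (EuclideanSpace ℝ ι)} {f : EuclideanSpace ℝ ι → ℝ} {k : ℕ}
    {P : MvPolynomial ι ℝ} (hP : P.totalDegree ≤ k)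
    (horth : ∀ Q : MvPolynomial ι ℝ, Q.totalDegree ≤ k →
      ∫ x in s, (f x - MvPolynomial.eval (fun i => x i) P) *
        MvPolynomial.eval (fun i => x i) Q ∂μ = 0)
    (a : ℝ) (hint₁ : IntegrableOn (fun x => (f x - MvPolynomial.eval (fun i => x i) P) ^ 2) s μ)
    (hint₂ : IntegrableOn
      (fun x => (f x - MvPolynomial.eval (fun i => x i) P) * (f x - a)) s μ) :
    ∫ x in s, (f x - MvPolynomial.eval (fun i => x i) P) ^ 2 ∂μ =
      ∫ x in s, (f x - MvPolynomial.eval (fun i => x i) P) * (f x - a) ∂μ := by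
  have hQ : (MvPolynomial.C a - P).totalDegree ≤ k :=
    (MvPolynomial.totalDegree_sub _ _).trans (max_le (by simp) hP)
  rw [← sub_eq_zero, ← integral_sub hint₁ hint₂, ← horth _ hQ]
  congr 1 with x
  simp only [map_sub, MvPolynomial.eval_C]
  ring

theorem setAverage_abs_sub_eval_le {ι : Type*} [Fintype ι] {f : EuclideanSpace ℝ ι → ℝ}
    (hf : Continuous f) {c : EuclideanSpace ℝ ι} {r ε : ℝ} (hr : 0 < r) {k : ℕ}
    {P : MvPolynomial ι ℝ} (hP : P.totalDegree ≤ k)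
    (horth : ∀ Q : MvPolynomial ι ℝ, Q.totalDegree ≤ k →
      ∫ x in ball c r, (f x - MvPolynomial.eval (fun i => x i) P) *
        MvPolynomial.eval (fun i => x i) Q = 0)
    (hosc : ∀ x ∈ ball c r, |f x - f c| ≤ ε) :
    ⨍ x in ball c r, |f x - MvPolynomial.eval (fun i => x i) P| ≤ ε := by
  have hint : ∀ φ : EuclideanSpace ℝ ι → ℝ, Continuous φ → IntegrableOn φ (ball c r) :=
    fun φ hφ => (hφ.locallyIntegrable.integrableOn_isCompact
      (isCompact_closedBall c r)).mono_set ball_subset_closedBall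
  have hg : Continuous fun x : EuclideanSpace ℝ ι => f x - MvPolynomial.eval (fun i => x i) P :=
    hf.sub (P.continuous_eval.comp (by fun_prop))
  have : IsFiniteMeasure (volume.restrict (ball c r)) :=
    isFiniteMeasure_restrict.2 measure_ball_lt_top.ne
  have : NeZero (volume.restrict (ball c r)) :=
    ⟨by simpa using (measure_ball_pos volume c hr).ne'⟩
  exact average_abs_le_of_integral_sq_eq (hint _ hg) (hint _ (hg.pow 2))
    (setIntegral_sq_sub_eval_eq hP horth (f c) (hint _ (hg.pow 2))
      (hint _ (hg.mul (hf.sub continuous_const))))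
    ((ae_restrict_iff' measurableSet_ball).2 (ae_of_all _ hosc))

theorem nonneg_of_abs_sub_le_mul_dist_rpow {X : Type*} [MetricSpace X] [Nontrivial X]
    {f : X → ℝ} {L γ : ℝ} (hL : ∀ x y, |f x - f y| ≤ L * dist x y ^ γ) : 0 ≤ L := by
  obtain ⟨x, y, hxy⟩ := exists_pair_ne X
  exact nonneg_of_mul_nonneg_left ((abs_nonneg _).trans (hL x y))
    (rpow_pos_of_pos (dist_pos.2 hxy) γ)

theorem measureReal_ball_rpow_div_finrank {E : Type*} [NormedAddCommGroup E] [NormedSpace ℝ E]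
    [MeasurableSpace E] [BorelSpace E] [FiniteDimensional ℝ E] (μ : Measure E)
    [μ.IsAddHaarMeasure] (x : E) {r : ℝ} (hr : 0 < r) (hE : Module.finrank ℝ E ≠ 0) (γ : ℝ) :
    μ.real (ball x r) ^ (γ / Module.finrank ℝ E) =
      r ^ γ * μ.real (ball 0 1) ^ (γ / Module.finrank ℝ E) := by
  rw [measureReal_def, Measure.addHaar_ball_of_pos μ x hr, ENNReal.toReal_mul,
    ENNReal.toReal_ofReal (by positivity), ← measureReal_def,
    mul_rpow (by positivity) measureReal_nonneg, ← rpow_natCast, ← rpow_mul hr.le,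
    mul_div_cancel₀ _ (by exact_mod_cast hE)]

theorem lipschitz_poly_approx_general (n k : ℕ) (hn : 1 ≤ n) (γ : ℝ)
    (hγ0 : 0 < γ) :
    ∃ C > (0 : ℝ), ∀ (f : EuclideanSpace ℝ (Fin n) → ℝ) (N L : ℝ),
      Continuous f →
      (∀ x, |f x| ≤ N) →
      (∀ x y, |f x - f y| ≤ L * dist x y ^ γ) →
      ∀ (c : EuclideanSpace ℝ (Fin n)) (r : ℝ), 0 < r →
        ∀ P : MvPolynomial (Fin n) ℝ, P.totalDegree ≤ k →
          (∀ Q : MvPolynomial (Fin n) ℝ, Q.totalDegree ≤ k →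
            ∫ x in ball c r,
              (f x - MvPolynomial.eval (fun i => x i) P) *
                MvPolynomial.eval (fun i => x i) Q = 0) →
          ((volume (ball c r)).toReal)⁻¹ *
              ∫ x in ball c r, |f x - MvPolynomial.eval (fun i => x i) P| ≤
            C * (N + L) * (volume (ball c r)).toReal ^ (γ / n) := by
  set ω := volume.real (ball (0 : EuclideanSpace ℝ (Fin n)) 1) with hω_def
  have hω : 0 < ω :=
    ENNReal.toReal_pos (measure_ball_pos volume 0 one_pos).ne' measure_ball_lt_top.ne
  refine ⟨ω ^ (-(γ / n)), by positivity, fun f N L hf hN hL c r hr P hP horth => ?_⟩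
  have : Nonempty (Fin n) := ⟨⟨0, hn⟩⟩
  have hL0 : 0 ≤ L := nonneg_of_abs_sub_le_mul_dist_rpow hL
  have hN0 : 0 ≤ N := (abs_nonneg _).trans (hN c)
  have hosc : ∀ x ∈ ball c r, |f x - f c| ≤ L * r ^ γ := fun x hx =>
    (hL x c).trans (by gcongr; exact (mem_ball.1 hx).le)
  have hvol := measureReal_ball_rpow_div_finrank volume c hr
    (by rw [finrank_euclideanSpace_fin]; omega) γ
  rw [finrank_euclideanSpace_fin, ← hω_def] at hvol
  calc ((volume (ball c r)).toReal)⁻¹ *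
        ∫ x in ball c r, |f x - MvPolynomial.eval (fun i => x i) P|
      = ⨍ x in ball c r, |f x - MvPolynomial.eval (fun i => x i) P| := by
        rw [setAverage_eq, smul_eq_mul, measureReal_def]
    _ ≤ L * r ^ γ := setAverage_abs_sub_eval_le hf hr hP horth hosc
    _ ≤ (N + L) * r ^ γ := by gcongr; linarith
    _ = ω ^ (-(γ / n)) * (N + L) * (volume (ball c r)).toReal ^ (γ / n) := by
        rw [← measureReal_def, hvol, rpow_neg hω.le]
        field_simp

/-- Campanato-type estimate: for f in the inhomogeneous Lipschitz space Λ_γ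
(with norm N + L, where N bounds |f| and L is the γ-Hölder constant), the mean
of |f − P_B^k f| over a ball B is ≤ C‖f‖_{Λ_γ}|B|^{γ/n}.  The L²(B)-projection
P_B^k f is characterized by the orthogonality relations. -/
theorem lipschitz_poly_approx (n k : ℕ) (hn : 1 ≤ n) (γ : ℝ)
    (hγ0 : 0 < γ) (hγ1 : γ < 1) (hk : γ ≤ (k : ℝ)) :
    ∃ C > (0 : ℝ), ∀ (f : EuclideanSpace ℝ (Fin n) → ℝ) (N L : ℝ),
      Continuous f →
      (∀ x, |f x| ≤ N) →
      (∀ x y, |f x - f y| ≤ L * dist x y ^ γ) →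
      ∀ (c : EuclideanSpace ℝ (Fin n)) (r : ℝ), 0 < r →
        ∀ P : MvPolynomial (Fin n) ℝ, P.totalDegree ≤ k →
          (∀ Q : MvPolynomial (Fin n) ℝ, Q.totalDegree ≤ k →
            ∫ x in ball c r,
              (f x - MvPolynomial.eval (fun i => x i) P) *
                MvPolynomial.eval (fun i => x i) Q = 0) →
          ((volume (ball c r)).toReal)⁻¹ *
              ∫ x in ball c r, |f x - MvPolynomial.eval (fun i => x i) P| ≤
            C * (N + L) * (volume (ball c r)).toReal ^ (γ / n) :=
  lipschitz_poly_approx_general n k hn γ hγ0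
end

section
/- Suppose φ is locally integrable on ℝⁿ and for every b ∈ bmo(ℝⁿ) the product bφ is in bmo(ℝⁿ) with ‖bφ‖_{bmo} ≤ C‖b‖_{bmo} for a fixed constant C. Then φ ∈ L^∞(ℝⁿ) with ‖φ‖_∞ ≤ C′ C for a dimensional constant C′. -/
open Real MeasureTheory Metric

/-- The average of b over the ball of center c and radius r. -/
noncomputable def avgBall {n : ℕ} (b : EuclideanSpace ℝ (Fin n) → ℝ)
    (c : EuclideanSpace ℝ (Fin n)) (r : ℝ) : ℝ :=
  ((volume (ball c r)).toReal)⁻¹ * ∫ x in ball c r, b x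

/-- "b is in bmo(ℝⁿ) with norm at most M". -/
def BmoLE {n : ℕ} (b : EuclideanSpace ℝ (Fin n) → ℝ) (M : ℝ) : Prop :=
  (∀ (c : EuclideanSpace ℝ (Fin n)) (r : ℝ), 0 < r → volume (ball c r) ≤ 1 →
    ((volume (ball c r)).toReal)⁻¹ * ∫ x in ball c r, |b x - avgBall b c r| ≤ M) ∧
  (∀ (c : EuclideanSpace ℝ (Fin n)) (r : ℝ), 0 < r → 1 ≤ volume (ball c r) →
    ((volume (ball c r)).toReal)⁻¹ * ∫ x in ball c r, |b x| ≤ M)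

/-!
Testing the multiplier on the constant `1`, whose `bmo` norm is `1`, and iterating shows that
`φ ^ k ∈ bmo` with norm at most `C ^ k`. On a ball `B` with `|B| ≥ 1` the large-ball part of the
norm gives `∫_B |φ| ^ k ≤ |B| C ^ k` for every `k`, and Markov's inequality with `k → ∞` yields
`|φ| ≤ C` a.e. on `B`. Such balls cover `ℝⁿ`, so one can take `C' = 1`.
-/

open Filter Topology

section Markov

variable {α : Type*} [MeasurableSpace α] {μ : Measure α} [IsFiniteMeasure μ] {f : α → ℝ} {C : ℝ}

theorem measureReal_abs_ge_le_of_integral_abs_pow_le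
    (hint : ∀ k : ℕ, Integrable (fun x => f x ^ k) μ)
    (hbound : ∀ k : ℕ, ∫ x, |f x ^ k| ∂μ ≤ μ.real Set.univ * C ^ k)
    {a : ℝ} (ha : 0 < a) (k : ℕ) :
    μ.real {x | a ≤ |f x|} ≤ μ.real Set.univ * (C / a) ^ k := by
  have hsub : {x | a ≤ |f x|} ⊆ {x | a ^ k ≤ |f x ^ k|} := fun x hx => by
    simpa only [Set.mem_ofPred_eq, abs_pow] using pow_le_pow_left₀ ha.le hx k
  have hmarkov := mul_meas_ge_le_integral_of_nonneg
    (ae_of_all μ fun x => abs_nonneg (f x ^ k)) (hint k).abs (a ^ k)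
  rw [div_pow, ← mul_div_assoc, le_div_iff₀ (pow_pos ha k), mul_comm]
  calc a ^ k * μ.real {x | a ≤ |f x|}
      ≤ a ^ k * μ.real {x | a ^ k ≤ |f x ^ k|} :=
        mul_le_mul_of_nonneg_left (measureReal_mono hsub) (by positivity)
    _ ≤ μ.real Set.univ * C ^ k := hmarkov.trans (hbound k)

theorem ae_abs_le_of_integral_abs_pow_le (hC : 0 ≤ C)
    (hint : ∀ k : ℕ, Integrable (fun x => f x ^ k) μ)
    (hbound : ∀ k : ℕ, ∫ x, |f x ^ k| ∂μ ≤ μ.real Set.univ * C ^ k) :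
    ∀ᵐ x ∂μ, |f x| ≤ C := by
  have hlt : ∀ a, C < a → ∀ᵐ x ∂μ, |f x| < a := by
    intro a hCa
    have ha : 0 < a := hC.trans_lt hCa
    have hlim : Tendsto (fun k : ℕ => μ.real Set.univ * (C / a) ^ k) atTop (𝓝 0) := by
      simpa using (tendsto_pow_atTop_nhds_zero_of_lt_one (div_nonneg hC ha.le)
        ((div_lt_one ha).2 hCa)).const_mul (μ.real Set.univ)
    have hnull : μ.real {x | a ≤ |f x|} = 0 := le_antisymm
      (ge_of_tendsto' hlim (measureReal_abs_ge_le_of_integral_abs_pow_le hint hbound ha))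
      measureReal_nonneg
    rw [measureReal_eq_zero_iff] at hnull
    simpa only [ae_iff, not_lt] using hnull
  have hseq : ∀ᵐ x ∂μ, ∀ j : ℕ, |f x| < C + 1 / (j + 1) :=
    ae_all_iff.2 fun j => hlt _ (lt_add_of_pos_right C Nat.one_div_pos_of_nat)
  filter_upwards [hseq] with x hx
  exact ge_of_tendsto' (by simpa using tendsto_one_div_add_atTop_nhds_zero_nat.const_add C)
    fun j => (hx j).le

end Markov

theorem EuclideanSpace.volume_ball_fin_zero (x : EuclideanSpace ℝ (Fin 0)) {r : ℝ} (hr : 0 < r) :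
    volume (ball x r) = 1 := by
  have hball : ball x r = Set.univ :=
    Set.eq_univ_of_forall fun y => by simp [Subsingleton.elim y x, hr]
  have hpreimage := (PiLp.volume_preserving_toLp (Fin 0)).measure_preimage
    (s := Set.univ) MeasurableSet.univ.nullMeasurableSet
  rw [hball, ← hpreimage]
  simp [volume_pi]

theorem EuclideanSpace.eventually_one_le_volume_ball (n : ℕ) (x : EuclideanSpace ℝ (Fin n)) :
    ∀ᶠ r in atTop, 1 ≤ volume (ball x r) := by
  rcases n.eq_zero_or_pos with rfl | hn
  · filter_upwards [eventually_gt_atTop 0] with r hr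
    exact (EuclideanSpace.volume_ball_fin_zero x hr).ge
  · have : Nonempty (Fin n) := Fin.pos_iff_nonempty.mp hn
    have hc : ENNReal.ofReal (√π ^ n / Gamma (n / 2 + 1)) ≠ 0 :=
      (ENNReal.ofReal_pos.2 (by positivity)).ne'
    have hlim : Tendsto (fun r => volume (ball x r)) atTop (𝓝 ⊤) := by
      simp_rw [EuclideanSpace.volume_ball, Fintype.card_fin]
      have := ((ENNReal.continuous_pow n).tendsto ⊤).comp ENNReal.tendsto_ofReal_atTop
      rw [ENNReal.top_pow hn.ne'] at this
      rw [← ENNReal.top_mul hc]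
      exact ENNReal.Tendsto.mul_const this (Or.inr ENNReal.ofReal_ne_top)
    exact (hlim.eventually_const_lt ENNReal.one_lt_top).mono fun _ => le_of_lt

section Bmo

variable {n : ℕ}

theorem bmoLE_const (c : ℝ) : BmoLE (fun _ : EuclideanSpace ℝ (Fin n) => c) |c| := by
  have hvol : ∀ (x : EuclideanSpace ℝ (Fin n)) {r : ℝ}, 0 < r → (volume (ball x r)).toReal ≠ 0 :=
    fun x r hr => (ENNReal.toReal_pos (measure_ball_pos volume x hr).ne' measure_ball_lt_top.ne).ne'
  have havg : ∀ (x : EuclideanSpace ℝ (Fin n)) {r : ℝ}, 0 < r → avgBall (fun _ => c) x r = c :=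
    fun x r hr => by simp [avgBall, measureReal_def, inv_mul_cancel_left₀ (hvol x hr)]
  refine ⟨fun x r hr _ => ?_, fun x r hr _ => ?_⟩
  · simp [havg x hr]
  · simp [measureReal_def, inv_mul_cancel_left₀ (hvol x hr)]

theorem BmoLE.integral_abs_le {b : EuclideanSpace ℝ (Fin n) → ℝ} {M : ℝ} (hb : BmoLE b M)
    {c : EuclideanSpace ℝ (Fin n)} {r : ℝ} (hr : 0 < r) (hvol : 1 ≤ volume (ball c r)) :
    ∫ x in ball c r, |b x| ≤ volume.real (ball c r) * M := by
  have hpos : 0 < volume.real (ball c r) :=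
    ENNReal.toReal_pos (measure_ball_pos volume c hr).ne' measure_ball_lt_top.ne
  rw [← inv_mul_le_iff₀ hpos]
  exact hb.2 c r hr hvol

def IsBmoMultiplier (φ : EuclideanSpace ℝ (Fin n) → ℝ) (C : ℝ) : Prop :=
  ∀ (b : EuclideanSpace ℝ (Fin n) → ℝ) (M : ℝ), 0 ≤ M → LocallyIntegrable b volume → BmoLE b M →
    LocallyIntegrable (fun x => b x * φ x) volume ∧ BmoLE (fun x => b x * φ x) (C * M)

theorem IsBmoMultiplier.pow {φ : EuclideanSpace ℝ (Fin n) → ℝ} {C : ℝ}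
    (hφ : IsBmoMultiplier φ C) (hC : 0 ≤ C) (k : ℕ) :
    LocallyIntegrable (fun x => φ x ^ k) volume ∧ BmoLE (fun x => φ x ^ k) (C ^ k) := by
  induction k with
  | zero => simpa using ⟨locallyIntegrable_const 1, by simpa using bmoLE_const (n := n) 1⟩
  | succ k ih => simpa only [pow_succ, mul_comm C] using hφ _ _ (pow_nonneg hC k) ih.1 ih.2

end Bmo

theorem bmo_multiplier_bounded_general (n : ℕ) :
    ∃ C' > (0 : ℝ), ∀ (φ : EuclideanSpace ℝ (Fin n) → ℝ) (C : ℝ), 0 < C →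
      LocallyIntegrable φ volume →
      (∀ (b : EuclideanSpace ℝ (Fin n) → ℝ) (M : ℝ), 0 ≤ M →
        LocallyIntegrable b volume → BmoLE b M →
        LocallyIntegrable (fun x => b x * φ x) volume ∧
          BmoLE (fun x => b x * φ x) (C * M)) →
      ∀ᵐ x ∂(volume : Measure (EuclideanSpace ℝ (Fin n))), |φ x| ≤ C' * C := by
  refine ⟨1, one_pos, fun φ C hC _ (hφ : IsBmoMultiplier φ C) => ?_⟩
  obtain ⟨R, hR⟩ := (EuclideanSpace.eventually_one_le_volume_ball n 0).exists_forall_of_atTop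
  rw [one_mul, ← Measure.restrict_univ (μ := volume), ← iUnion_ball_nat_succ 0,
    ae_restrict_iUnion_iff]
  intro m
  set r := max R (m + 1)
  have hr : 0 < r := lt_max_of_lt_right (by positivity)
  have : IsFiniteMeasure (volume.restrict (ball (0 : EuclideanSpace ℝ (Fin n)) r)) :=
    isFiniteMeasure_restrict.2 measure_ball_lt_top.ne
  refine ae_restrict_of_ae_restrict_of_subset (ball_subset_ball (le_max_right R _)) ?_
  exact ae_abs_le_of_integral_abs_pow_le hC.le
    (fun k => ((hφ.pow hC.le k).1.integrableOn_isCompact (isCompact_closedBall 0 r)).mono_set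
      ball_subset_closedBall)
    (fun k => by
      simpa only [measureReal_restrict_apply_univ] using
        (hφ.pow hC.le k).2.integral_abs_le hr (hR r (le_max_left _ _)))

/-- If multiplication by φ is bounded on bmo(ℝⁿ) with constant C,
then φ is essentially bounded by C′C, with C′ dimensional. -/
theorem bmo_multiplier_bounded (n : ℕ) (hn : 1 ≤ n) :
    ∃ C' > (0 : ℝ), ∀ (φ : EuclideanSpace ℝ (Fin n) → ℝ) (C : ℝ), 0 < C →
      LocallyIntegrable φ volume →
      (∀ (b : EuclideanSpace ℝ (Fin n) → ℝ) (M : ℝ), 0 ≤ M →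
        LocallyIntegrable b volume → BmoLE b M →
        LocallyIntegrable (fun x => b x * φ x) volume ∧
          BmoLE (fun x => b x * φ x) (C * M)) →
      ∀ᵐ x ∂(volume : Measure (EuclideanSpace ℝ (Fin n))), |φ x| ≤ C' * C :=
  bmo_multiplier_bounded_general n
end
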